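/- For every μ, θ ∈ ℝ, σ_W > 0 and σ ≥ 0, with s = √(σ_W² + σ²) and t = (θ − μ)/s, one has ∫_{ℝ²} (μ + σ_W z₁) · 1{μ + σ_W z₁ + σ z₂ ≥ θ} φ(z₁) φ(z₂) dz₁ dz₂ = μ·Φ^c(t) + (σ_W²/s)·φ(t). (This is the expected latent quality mass of the candidates whose noisy estimate Ŵ = W + σ Z₂ exceeds the threshold θ, when W = μ + σ_W Z₁.) -/

import Mathlib

open MeasureTheory Set

/-- Standard normal density. -/
noncomputable def phi (t : ℝ) : ℝ := Real.exp (-t ^ 2 / 2) / Real.sqrt (2 * Real.pi)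

/-- Standard normal CDF. -/
noncomputable def Phi (t : ℝ) : ℝ := ∫ u in Set.Iic t, phi u

/-- Standard normal complementary CDF. -/
noncomputable def Phic (t : ℝ) : ℝ := 1 - Phi t

/-!
Rotate the plane so that the first axis points along `(σ_W, σ) / s`. The product density
`φ(z₁) φ(z₂)` is rotation invariant, the selection event becomes the half-plane `{w₁ ≥ t}`
and the integrand becomes affine, `μ + (σ_W² / s) w₁ - (σ_W σ / s) w₂`. The `w₂`-term has
mean zero, and the `w₁`-term integrates over `(t, ∞)` to `μ Φᶜ(t) + (σ_W² / s) φ(t)`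
because `φ' = -x φ`.
-/

open Real Filter Topology ProbabilityTheory

section

variable {E F : Type*} [NormedAddCommGroup E] [NormedSpace ℝ E] [MeasurableSpace E]
  [BorelSpace E] [FiniteDimensional ℝ E] [NormedAddCommGroup F] [NormedSpace ℝ F]

theorem integral_comp_linearMap_of_abs_det_eq_one (μ : Measure E) [μ.IsAddHaarMeasure]
    {f : E →ₗ[ℝ] E} (hf : |LinearMap.det f| = 1) (g : E → F) :
    ∫ x, g (f x) ∂μ = ∫ x, g x ∂μ := by
  have hf₀ : LinearMap.det f ≠ 0 := fun h => by simp [h] at hf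
  let e := (f.equivOfDetNeZero hf₀).toContinuousLinearEquiv.toHomeomorph.toMeasurableEquiv
  have he : MeasurePreserving e μ μ :=
    ⟨e.measurable, by
      show Measure.map f μ = μ
      simpa [hf] using Measure.map_linearMap_addHaar_eq_smul_addHaar μ hf₀⟩
  exact he.integral_comp' g

theorem integral_comp_rotation {c s : ℝ} (h : c ^ 2 + s ^ 2 = 1) (g : ℝ × ℝ → F) :
    ∫ z : ℝ × ℝ, g (c * z.1 - s * z.2, s * z.1 + c * z.2) = ∫ z, g z := by
  have hdet : LinearMap.det (Matrix.toLin (Module.Basis.finTwoProd ℝ)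
      (Module.Basis.finTwoProd ℝ) !![c, -s; s, c]) = 1 := by
    rw [LinearMap.det_toLin, Matrix.det_fin_two_of]
    linear_combination h
  convert integral_comp_linearMap_of_abs_det_eq_one volume (by rw [hdet, abs_one]) g using 3
  simp [sub_eq_add_neg]

end

theorem phi_eq_gaussianPDFReal : phi = gaussianPDFReal 0 1 := by
  ext x
  simp [phi, gaussianPDFReal, div_eq_inv_mul]

theorem phi_nonneg (x : ℝ) : 0 ≤ phi x :=
  phi_eq_gaussianPDFReal ▸ gaussianPDFReal_nonneg 0 1 x

theorem phi_neg (x : ℝ) : phi (-x) = phi x := by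
  simp [phi]

theorem integrable_phi : Integrable phi :=
  phi_eq_gaussianPDFReal ▸ integrable_gaussianPDFReal 0 1

theorem integral_phi : ∫ x, phi x = 1 :=
  phi_eq_gaussianPDFReal ▸ integral_gaussianPDFReal_eq_one 0 one_ne_zero

theorem integrable_mul_phi : Integrable fun x => x * phi x := by
  refine ((integrable_mul_exp_neg_mul_sq one_half_pos).div_const √(2 * π)).congr
    (ae_of_all _ fun x => ?_)
  simp only [phi]
  ring_nf

theorem integral_mul_phi : ∫ x, x * phi x = 0 := by
  have h := integral_neg_eq_self (fun x => x * phi x) volume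
  simp only [phi_neg, neg_mul, integral_neg] at h
  linarith

theorem hasDerivAt_phi (x : ℝ) : HasDerivAt phi (-(x * phi x)) x := by
  have h : HasDerivAt (fun y => -y ^ 2 / 2) (-x) x :=
    ((hasDerivAt_pow 2 x).fun_neg.div_const 2).congr_deriv (by norm_num; ring)
  exact (h.exp.div_const √(2 * π)).congr_deriv (by simp only [phi]; ring)

theorem tendsto_phi_atTop : Tendsto phi atTop (𝓝 0) := by
  have h : Tendsto (fun x : ℝ => -x ^ 2 / 2) atTop atBot :=
    (tendsto_neg_atTop_atBot.comp (tendsto_pow_atTop two_ne_zero)).atBot_div_const two_pos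
  have := (tendsto_exp_atBot.comp h).div_const √(2 * π)
  rwa [zero_div] at this

theorem integral_Ioi_mul_phi (t : ℝ) : ∫ x in Ioi t, x * phi x = phi t := by
  have h := integral_Ioi_of_hasDerivAt_of_tendsto' (f := fun x => -phi x) (a := t)
    (fun x _ => by simpa using (hasDerivAt_phi x).fun_neg) integrable_mul_phi.integrableOn
    (by simpa using tendsto_phi_atTop.neg)
  simpa using h

theorem integral_Ioi_phi (t : ℝ) : ∫ x in Ioi t, phi x = Phic t := by
  rw [Phic, Phi, ← integral_phi, ← intervalIntegral.integral_Iic_add_Ioi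
    integrable_phi.integrableOn integrable_phi.integrableOn]
  ring

theorem phi_mul_phi_of_sq_add_sq_eq {a b c d : ℝ} (h : a ^ 2 + b ^ 2 = c ^ 2 + d ^ 2) :
    phi a * phi b = phi c * phi d := by
  simp only [phi, div_mul_div_comm, ← Real.exp_add]
  congr 2
  linarith

theorem integral_Ioi_affine_mul_phi (μ a t : ℝ) :
    ∫ u in Ioi t, (μ + a * u) * phi u = μ * Phic t + a * phi t := by
  simp_rw [add_mul, mul_assoc]
  rw [integral_add (integrable_phi.const_mul μ).integrableOn
      (integrable_mul_phi.const_mul a).integrableOn,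
    integral_const_mul, integral_const_mul, integral_Ioi_phi, integral_Ioi_mul_phi]

theorem integral_affine_mul_indicator_mul_phi_mul_phi (μ a b t : ℝ) :
    ∫ w : ℝ × ℝ, (μ + a * w.1 - b * w.2) * (if t ≤ w.1 then (1 : ℝ) else 0)
      * phi w.1 * phi w.2 = μ * Phic t + a * phi t := by
  have hsplit : ∀ w : ℝ × ℝ,
      (μ + a * w.1 - b * w.2) * (if t ≤ w.1 then (1 : ℝ) else 0) * phi w.1 * phi w.2 =
        (Ici t).indicator (fun u => (μ + a * u) * phi u) w.1 * phi w.2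
          - b * ((Ici t).indicator phi w.1 * (w.2 * phi w.2)) := by
    intro w
    by_cases h : t ≤ w.1
    · simp only [indicator, mem_Ici, h, if_true]
      ring
    · simp [indicator, h]
  have hf : Integrable fun u => (μ + a * u) * phi u :=
    ((integrable_phi.const_mul μ).add (integrable_mul_phi.const_mul a)).congr
      (ae_of_all _ fun u => by simp only [Pi.add_apply]; ring)
  simp_rw [hsplit]
  rw [integral_sub, Measure.volume_eq_prod, integral_const_mul, integral_prod_mul,
    integral_prod_mul (fun u => (Ici t).indicator phi u) (fun v => v * phi v),
    integral_mul_phi, integral_phi, integral_indicator measurableSet_Ici,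
    integral_Ici_eq_integral_Ioi, integral_Ioi_affine_mul_phi]
  · ring
  · exact (hf.indicator measurableSet_Ici).mul_prod integrable_phi
  · exact ((integrable_phi.indicator measurableSet_Ici).mul_prod integrable_mul_phi).const_mul b

theorem quality_integrand_comp_rotation {μ θ σW σ s : ℝ} (hs : 0 < s)
    (hss : s ^ 2 = σW ^ 2 + σ ^ 2) (w : ℝ × ℝ) :
    (μ + σW * (σW / s * w.1 - σ / s * w.2))
      * (if θ ≤ μ + σW * (σW / s * w.1 - σ / s * w.2) + σ * (σ / s * w.1 + σW / s * w.2)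
          then (1 : ℝ) else 0)
      * phi (σW / s * w.1 - σ / s * w.2) * phi (σ / s * w.1 + σW / s * w.2)
    = (μ + σW ^ 2 / s * w.1 - σW * σ / s * w.2)
      * (if (θ - μ) / s ≤ w.1 then (1 : ℝ) else 0) * phi w.1 * phi w.2 := by
  have hlevel : μ + σW * (σW / s * w.1 - σ / s * w.2) + σ * (σ / s * w.1 + σW / s * w.2)
      = μ + s * w.1 := by
    field_simp
    linear_combination (-w.1) * hss
  have hcond : θ ≤ μ + s * w.1 ↔ (θ - μ) / s ≤ w.1 := by
    rw [div_le_iff₀ hs]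
    constructor <;> intro h <;> linarith
  have hphi : phi (σW / s * w.1 - σ / s * w.2) * phi (σ / s * w.1 + σW / s * w.2)
      = phi w.1 * phi w.2 := by
    apply phi_mul_phi_of_sq_add_sq_eq
    field_simp
    linear_combination (-(w.1 ^ 2 + w.2 ^ 2)) * hss
  rw [hlevel, if_congr hcond rfl rfl, mul_assoc _ (phi _), hphi, ← mul_assoc]
  congr 3
  field_simp
  ring

theorem quality_mass_above_threshold_general
    (μ θ σW σ : ℝ) (hσW : 0 < σW) :
    (∫ z : ℝ × ℝ,
      (μ + σW * z.1) * (if θ ≤ μ + σW * z.1 + σ * z.2 then (1 : ℝ) else 0)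
        * phi z.1 * phi z.2)
    = μ * Phic ((θ - μ) / Real.sqrt (σW ^ 2 + σ ^ 2))
      + (σW ^ 2 / Real.sqrt (σW ^ 2 + σ ^ 2))
        * phi ((θ - μ) / Real.sqrt (σW ^ 2 + σ ^ 2)) := by
  set s := √(σW ^ 2 + σ ^ 2)
  have hs : 0 < s := Real.sqrt_pos.mpr (by positivity)
  have hss : s ^ 2 = σW ^ 2 + σ ^ 2 := Real.sq_sqrt (by positivity)
  have hrot : (σW / s) ^ 2 + (σ / s) ^ 2 = 1 := by
    field_simp
    exact hss.symm
  rw [← integral_comp_rotation hrot,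
    ← integral_affine_mul_indicator_mul_phi_mul_phi μ (σW ^ 2 / s) (σW * σ / s)]
  simp_rw [quality_integrand_comp_rotation hs hss]

/-- The expected latent-quality mass of candidates whose noisy estimate
`Ŵ = W + σ Z₂` (with `W = μ + σ_W Z₁`) exceeds the threshold `θ` equals
`μ Φᶜ(t) + (σ_W²/s) φ(t)` where `s = √(σ_W² + σ²)` and `t = (θ - μ)/s`. -/
theorem quality_mass_above_threshold
    (μ θ σW σ : ℝ) (hσW : 0 < σW) (hσ : 0 ≤ σ) :
    (∫ z : ℝ × ℝ,
      (μ + σW * z.1) * (if θ ≤ μ + σW * z.1 + σ * z.2 then (1 : ℝ) else 0)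
        * phi z.1 * phi z.2)
    = μ * Phic ((θ - μ) / Real.sqrt (σW ^ 2 + σ ^ 2))
      + (σW ^ 2 / Real.sqrt (σW ^ 2 + σ ^ 2))
        * phi ((θ - μ) / Real.sqrt (σW ^ 2 + σ ^ 2)) :=
  quality_mass_above_threshold_general μ θ σW σ hσW
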